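/- Let (Γ, π, B) be a binary radix system. Let Γ̂ := {ω ∈ Ω : there exist d ∈ Γ and m ∈ ℤ with d(j) = 0 for all j < m and ω_i = d(m+i) for all i ≥ 0}, and define α := sup{γ ∈ Γ̂ : γ_0 = 0} and β := inf{γ ∈ Γ̂ : γ_0 = 1}, the supremum and infimum being taken in the lexicographic order on Ω. Then (α,β) is an admissible pair. -/

import Mathlib

open scoped Classical

/-- Infinite binary strings. -/
abbrev Omega : Type := ℕ → Bool

/-- The shift operator. -/
def shift (ω : Omega) : Omega := fun n => ω (n + 1)

/-- Strict lexicographic order on `Omega`. -/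
def lexLt (σ ω : Omega) : Prop :=
  ∃ k : ℕ, (∀ i, i < k → σ i = ω i) ∧ σ k < ω k

/-- Non-strict lexicographic order on `Omega`. -/
def lexLe (σ ω : Omega) : Prop := lexLt σ ω ∨ σ = ω

/-- An admissible pair of strings. -/
def Admissible (α β : Omega) : Prop :=
  α 0 = false ∧ α 1 = true ∧ β 0 = true ∧ β 1 = false ∧
  (∀ n : ℕ, ¬ (lexLt α (shift^[n] α) ∧ lexLe (shift^[n] α) β)) ∧
  (∀ n : ℕ, ¬ (lexLe α (shift^[n] β) ∧ lexLt (shift^[n] β) β))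

/-- The address space `Ω_{(α,β,−)}`. -/
def OmegaMinus (α β : Omega) : Set Omega :=
  {ω | ∀ n : ℕ, ¬ (lexLt α (shift^[n] ω) ∧ lexLe (shift^[n] ω) β)}

/-- The address space `Ω_{(α,β,+)}`. -/
def OmegaPlus (α β : Omega) : Set Omega :=
  {ω | ∀ n : ℕ, ¬ (lexLe α (shift^[n] ω) ∧ lexLt (shift^[n] ω) β)}

/-- The address space `Ω_{(α,β)}`. -/
def OmegaUnion (α β : Omega) : Set Omega := OmegaMinus α β ∪ OmegaPlus α β

/-- Length-`n` initial segments of the elements of `Γ`. -/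
def initSegs (Γ : Set Omega) (n : ℕ) : Set (Fin n → Bool) :=
  (fun ω (i : Fin n) => ω i) '' Γ

/-- Exponential growth rate `h(Γ)`. -/
noncomputable def growth (Γ : Set Omega) : ℝ :=
  Filter.limsup (fun n : ℕ => Real.log ((initSegs Γ n).ncard) / (n : ℝ)) Filter.atTop

/-- The projection map `π_x`. -/
noncomputable def proj (x : ℝ) (ω : Omega) : ℝ :=
  (1 - x) * ∑' k : ℕ, (if ω k then (1 : ℝ) else 0) * x ^ k

/-- The equation `Σ α_n x^n = Σ β_n x^n`. -/
def seriesEq (α β : Omega) (x : ℝ) : Prop :=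
  (∑' n : ℕ, (if α n then (1 : ℝ) else 0) * x ^ n) =
    (∑' n : ℕ, (if β n then (1 : ℝ) else 0) * x ^ n)

/-- Solutions in `[1/2,1)` of `Σ α_n x^n = Σ β_n x^n`. -/
def baseSet (α β : Omega) : Set ℝ :=
  {x : ℝ | x ∈ Set.Ico (1/2 : ℝ) 1 ∧ seriesEq α β x}

/-- A decimal: a two-sided binary string vanishing far to the left. -/
def IsDecimal (d : ℤ → Bool) : Prop := ∃ m : ℤ, ∀ j, j < m → d j = false

/-- Strict order on decimals. -/
def decLt (d e : ℤ → Bool) : Prop :=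
  ∃ j : ℤ, (∀ i, i < j → d i = e i) ∧ d j < e j

/-- The set `Γ^•` of decimals obtained from strings in `Γ`. -/
def dot (Γ : Set Omega) : Set (ℤ → Bool) :=
  {d | ∃ m : ℤ, ∃ γ ∈ Γ, (∀ j, j < m → d j = false) ∧ ∀ i : ℕ, d (m + i) = γ i}

/-- Prepend a `0` to a string. -/
def cons0 (ω : Omega) : Omega := fun n => match n with | 0 => false | k + 1 => ω k

/-- The space `Ω⁰_{(α,β,−)}`. -/
def Omega0Minus (α β : Omega) : Set Omega :=
  {ω ∈ OmegaMinus α β | lexLe (cons0 ω) α}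

/-- The space `Ω⁰_{(α,β,+)}`. -/
def Omega0Plus (α β : Omega) : Set Omega :=
  {ω ∈ OmegaPlus α β | lexLt (cons0 ω) α}

/-- The address space of decimals `Ω^•_{(α,β,−)}`. -/
def dotMinus (α β : Omega) : Set (ℤ → Bool) := dot (Omega0Minus α β)

/-- The address space of decimals `Ω^•_{(α,β,+)}`. -/
def dotPlus (α β : Omega) : Set (ℤ → Bool) := dot (Omega0Plus α β)

/-- The address space of decimals `Ω^•_{(α,β)}`. -/
def dotUnion (α β : Omega) : Set (ℤ → Bool) :=
  dot (Omega0Minus α β ∪ Omega0Plus α β)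

/-- The radix map `d ↦ Σ_{j ∈ ℤ} d(j)·B^(−j)`. -/
noncomputable def radixVal (B : ℝ) (d : ℤ → Bool) : ℝ :=
  ∑' j : ℤ, (if d j then (1 : ℝ) else 0) * B ^ (-j)

/-- Shift invariance for a set of decimals. -/
def ShiftInvariantDec (Γ : Set (ℤ → Bool)) : Prop :=
  ∀ d ∈ Γ, ∀ k m : ℤ,
    (fun j : ℤ => if m ≤ j then d (j + k) else false) ∈ Γ

/-- A binary radix system `(Γ, π, B)`: `B > 1`, `Γ` a shift-invariant set of decimals,
and the radix map `d ↦ Σ_j d(j)·B^(−j)` is a strictly increasing bijection from `Γ`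
onto `[0,∞)`. -/
structure BinaryRadixSystem where
  Γ : Set (ℤ → Bool)
  B : ℝ
  hB : 1 < B
  hdec : ∀ d ∈ Γ, IsDecimal d
  hshift : ShiftInvariantDec Γ
  hmono : ∀ d ∈ Γ, ∀ e ∈ Γ, decLt d e → radixVal B d < radixVal B e
  hbij : Set.BijOn (radixVal B) Γ (Set.Ici (0 : ℝ))

/-- The set `Γ̂` of infinite strings obtained from the decimals in `Γ` by removing the
decimal point (and the zeros to the left of the support). -/
def hatGamma (Γ : Set (ℤ → Bool)) : Set Omega :=
  {ω | ∃ d ∈ Γ, ∃ m : ℤ, (∀ j, j < m → d j = false) ∧ ∀ i : ℕ, ω i = d (m + i)}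

/-!
The strings of `Γ̂` form a set `G` that is closed under the shift and under prepending a `0`,
contains a string beginning with `1`, and is densely ordered: two strings of `Γ̂` placed at the same
position are decimals of `Γ`, and a decimal whose value lies strictly between theirs (surjectivity
of `π`) lies strictly between them in the order (monotonicity of `π`).

These properties alone force admissibility. The supremum `α` of the `0`-strings of `G` is
approximated by them to any length. If `α ≺ Sⁿα ⪯ β`, shift such an approximation `γ` by `n`: either
`Sⁿγ` is a `0`-string above `α`, or it is a `1`-string squeezed to `β`, in which case `γ = α` and
`Sⁿα = β` both lie in `G` with nothing of `G` between them. The conditions on `β` follow from the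
same argument applied to the complemented strings.
-/

open Set

section LexOrder

def IsLexLUB (A : Set Omega) (α : Omega) : Prop :=
  (∀ γ ∈ A, lexLe γ α) ∧ ∀ δ, (∀ γ ∈ A, lexLe γ δ) → lexLe α δ

def IsLexGLB (A : Set Omega) (β : Omega) : Prop :=
  (∀ γ ∈ A, lexLe β γ) ∧ ∀ δ, (∀ γ ∈ A, lexLe δ γ) → lexLe δ β

theorem lexLt_iff_toLex_lt {a b : Omega} : lexLt a b ↔ toLex a < toLex b := Iff.rfl

theorem lexLe_iff_toLex_le {a b : Omega} : lexLe a b ↔ toLex a ≤ toLex b := by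
  rw [le_iff_lt_or_eq, toLex_inj]
  rfl

theorem lexLe.trans {a b c : Omega} (hab : lexLe a b) (hbc : lexLe b c) : lexLe a c := by
  rw [lexLe_iff_toLex_le] at *
  exact hab.trans hbc

theorem lexLe_antisymm {a b : Omega} (hab : lexLe a b) (hba : lexLe b a) : a = b := by
  rw [lexLe_iff_toLex_le] at *
  exact toLex_inj.1 (le_antisymm hab hba)

theorem lexLe.not_lexLt {a b : Omega} (h : lexLe a b) : ¬ lexLt b a := by
  rw [lexLe_iff_toLex_le, lexLt_iff_toLex_lt] at *
  exact not_lt_of_ge h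

theorem lexLt_irrefl (a : Omega) : ¬ lexLt a a := lt_irrefl (toLex a)

theorem lexLe.apply_le {a b : Omega} {k : ℕ} (h : lexLe a b) (hag : ∀ i < k, a i = b i) :
    a k ≤ b k :=
  Pi.apply_le_of_toLex (lexLe_iff_toLex_le.1 h) hag

theorem lexLe_of_agree_of_eq_true {a b : Omega} {n : ℕ} (hag : ∀ i < n, a i = b i)
    (hb : ∀ i, n ≤ i → b i = true) : lexLe a b := by
  rw [lexLe_iff_toLex_le, ← not_lt]
  rintro ⟨k, hk, hlt⟩
  obtain ⟨hbk, hak⟩ : b k = false ∧ a k = true := Bool.lt_iff.1 hlt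
  rcases lt_or_ge k n with hkn | hkn
  · simp [hag k hkn, hbk] at hak
  · simp [hb k hkn] at hbk

theorem lexLe_cons0_true {γ : Omega} (h : γ 0 = false) : lexLe γ (cons0 fun _ => true) :=
  lexLe_of_agree_of_eq_true (n := 1) (fun i hi => by obtain rfl : i = 0 := (by omega); exact h)
    fun i hi => by obtain ⟨i, rfl⟩ := Nat.exists_eq_add_of_le' hi; rfl

theorem IsLexLUB.exists_agree {A : Set Omega} {α : Omega} (hα : IsLexLUB A α) (hne : A.Nonempty)
    (n : ℕ) : ∃ γ ∈ A, ∀ i < n, γ i = α i := by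
  induction n with
  | zero => exact ⟨hne.some, hne.some_mem, fun i hi => absurd hi (Nat.not_lt_zero i)⟩
  | succ n ih =>
    obtain ⟨γ, hγ, hagree⟩ := ih
    by_contra! hnone
    have hαn : α n = true := by
      obtain ⟨i, hi, hdiff⟩ := hnone γ hγ
      obtain rfl : i = n := by
        by_contra hin
        exact hdiff (hagree i (by omega))
      have := lt_of_le_of_ne ((hα.1 γ hγ).apply_le hagree) hdiff
      exact (Bool.lt_iff.1 this).2
    -- the largest string that differs from `α` first at `n`
    set δ : Omega := fun i => if i < n then α i else decide (n < i) with hδ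
    have hδub : ∀ γ' ∈ A, lexLe γ' δ := by
      intro γ' hγ'
      obtain ⟨i, hi, hdiff⟩ := hnone γ' hγ'
      obtain ⟨k, hk, hlt⟩ := (hα.1 γ' hγ').resolve_right fun h => hdiff (h ▸ rfl)
      have hki : k ≤ i := by
        by_contra! hik
        exact hdiff (hk i hik)
      rw [Bool.lt_iff] at hlt
      rcases lt_or_eq_of_le (show k ≤ n by omega) with hkn | rfl
      · exact Or.inl ⟨k, fun j hj => by simp [hδ, hk j hj, hj.trans hkn], by simp [hδ, hkn, hlt]⟩
      · refine lexLe_of_agree_of_eq_true (n := k + 1) (fun j hj => ?_) fun j hj => ?_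
        · rcases lt_or_eq_of_le (Nat.lt_succ_iff.1 hj) with hjk | rfl
          · simp [hδ, hk j hjk, hjk]
          · simp [hδ, hlt]
        · simp [hδ, show ¬ j < k by omega, show k < j by omega]
    exact (hα.2 δ hδub).not_lexLt ⟨n, fun i hi => by simp [hδ, hi], by simp [hδ, hαn]⟩

end LexOrder

section Shift

theorem shift_iterate_apply (n : ℕ) (ω : Omega) (i : ℕ) : shift^[n] ω i = ω (n + i) := by
  induction n generalizing ω with
  | zero => simp
  | succ n ih => rw [Function.iterate_succ_apply, ih, shift, Nat.add_right_comm]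

theorem lexLe_shift_iterate {a b : Omega} {n : ℕ} (h : lexLe a b) (hag : ∀ i < n, a i = b i) :
    lexLe (shift^[n] a) (shift^[n] b) := by
  rw [lexLe_iff_toLex_le, ← not_lt]
  rintro ⟨k, hk, hlt⟩
  refine h.not_lexLt ⟨n + k, fun i hi => ?_, by simpa [shift_iterate_apply] using hlt⟩
  rcases lt_or_ge i n with hin | hin
  · exact (hag i hin).symm
  · obtain ⟨j, rfl⟩ := Nat.exists_eq_add_of_le hin
    simpa [shift_iterate_apply] using hk j (by omega)

theorem eq_of_agree_of_shift_iterate_eq {a b : Omega} {n : ℕ} (hag : ∀ i < n, a i = b i)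
    (h : shift^[n] a = shift^[n] b) : a = b := by
  funext i
  rcases lt_or_ge i n with hin | hin
  · exact hag i hin
  · obtain ⟨j, rfl⟩ := Nat.exists_eq_add_of_le hin
    simpa [shift_iterate_apply] using congrFun h j

theorem shift_iterate_compl (n : ℕ) (ω : Omega) : shift^[n] ωᶜ = (shift^[n] ω)ᶜ := by
  funext i
  simp [shift_iterate_apply]

end Shift

section Compl

theorem lexLt_compl_iff {a b : Omega} : lexLt aᶜ bᶜ ↔ lexLt b a := by
  refine exists_congr fun k => and_congr (forall₂_congr fun i _ => ?_) ?_
  · show (!a i) = (!b i) ↔ b i = a i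
    cases a i <;> cases b i <;> decide
  · show (!a k) < (!b k) ↔ b k < a k
    cases a k <;> cases b k <;> decide

theorem lexLe_compl_iff {a b : Omega} : lexLe aᶜ bᶜ ↔ lexLe b a := by
  rw [lexLe, lexLe, lexLt_compl_iff, compl_inj_iff, eq_comm]

theorem lexLe_compl_left {a b : Omega} : lexLe aᶜ b ↔ lexLe bᶜ a := by
  rw [← lexLe_compl_iff, compl_compl]

theorem lexLe_compl_right {a b : Omega} : lexLe a bᶜ ↔ lexLe b aᶜ := by
  rw [← lexLe_compl_iff, compl_compl]

theorem IsLexGLB.compl {A : Set Omega} {β : Omega} (h : IsLexGLB A β) :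
    IsLexLUB {ω | ωᶜ ∈ A} βᶜ :=
  ⟨fun γ hγ => lexLe_compl_right.2 (h.1 _ hγ), fun δ hδ =>
    lexLe_compl_left.1 (h.2 δᶜ fun γ hγ => lexLe_compl_left.1 (hδ γᶜ (by simpa using hγ)))⟩

theorem IsLexLUB.compl {A : Set Omega} {α : Omega} (h : IsLexLUB A α) :
    IsLexGLB {ω | ωᶜ ∈ A} αᶜ :=
  ⟨fun γ hγ => lexLe_compl_left.2 (h.1 _ hγ), fun δ hδ =>
    lexLe_compl_right.1 (h.2 δᶜ fun γ hγ => lexLe_compl_right.1 (hδ γᶜ (by simpa using hγ)))⟩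

theorem compl_preimage_sep (G : Set Omega) (b : Bool) :
    {ω : Omega | ωᶜ ∈ {γ ∈ G | γ 0 = b}} = {γ ∈ {ω | ωᶜ ∈ G} | γ 0 = !b} := by
  ext ω
  simp [Bool.eq_not_iff]

end Compl

def LexDense (G : Set Omega) : Prop :=
  ∀ a ∈ G, ∀ b ∈ G, lexLt a b → ∃ γ ∈ G, lexLt a γ ∧ lexLt γ b

section ShiftClosedDense

variable {G : Set Omega} {α β : Omega}

theorem LexDense.compl (hdense : LexDense G) : LexDense {ω | ωᶜ ∈ G} := by
  intro a ha b hb hab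
  obtain ⟨γ, hγ, hbγ, hγa⟩ := hdense bᶜ hb aᶜ ha (lexLt_compl_iff.2 hab)
  refine ⟨γᶜ, by simpa using hγ, ?_, ?_⟩ <;> rwa [← lexLt_compl_iff, compl_compl]

theorem not_lexLt_of_mem_of_mem (hdense : LexDense G)
    (hα : IsLexLUB {γ ∈ G | γ 0 = false} α) (hβ : IsLexGLB {γ ∈ G | γ 0 = true} β)
    (hαG : α ∈ G) (hβG : β ∈ G) : ¬ lexLt α β := by
  intro hαβ
  obtain ⟨γ, hγ, hαγ, hγβ⟩ := hdense α hαG β hβG hαβ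
  cases h0 : γ 0
  · exact (hα.1 γ ⟨hγ, h0⟩).not_lexLt hαγ
  · exact (hβ.1 γ ⟨hγ, h0⟩).not_lexLt hγβ

theorem exists_zero_one (hcons0 : ∀ ω ∈ G, cons0 ω ∈ G) (hone : ∃ γ ∈ G, γ 0 = true) :
    ∃ γ ∈ G, γ 0 = false ∧ γ 1 = true := by
  obtain ⟨γ, hγ, h0⟩ := hone
  exact ⟨cons0 γ, hcons0 γ hγ, rfl, h0⟩

theorem exists_one_zero (hshift : MapsTo shift G G) (hcons0 : ∀ ω ∈ G, cons0 ω ∈ G)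
    (hone : ∃ γ ∈ G, γ 0 = true) (hdense : LexDense G) :
    ∃ γ ∈ G, γ 0 = true ∧ γ 1 = false := by
  by_contra! h
  have hconst : ∀ γ ∈ G, γ 0 = true → γ = fun _ => true := by
    intro γ hγ h0
    funext i
    induction i generalizing γ with
    | zero => exact h0
    | succ i ih => exact ih (shift γ) (hshift hγ) (by simpa [shift] using h γ hγ h0)
  obtain ⟨γ, hγ, h0⟩ := hone
  rw [hconst γ hγ h0] at hγ
  -- nothing lies strictly between `0111…` and `1111…`
  obtain ⟨γ', hγ', hlt, hgt⟩ := hdense _ (hcons0 _ hγ) _ hγ ⟨0, by simp, rfl⟩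
  cases h0' : γ' 0
  · exact (lexLe_cons0_true h0').not_lexLt hlt
  · exact lexLt_irrefl _ (hconst γ' hγ' h0' ▸ hgt)

theorem apply_zero_one_of_isLexLUB (hα : IsLexLUB {γ ∈ G | γ 0 = false} α)
    (h01 : ∃ γ ∈ G, γ 0 = false ∧ γ 1 = true) : α 0 = false ∧ α 1 = true := by
  have hα0 : α 0 = false := by
    refine Bool.eq_false_of_le_false ?_
    simpa [cons0] using (hα.2 _ fun γ hγ => lexLe_cons0_true hγ.2).apply_le (k := 0)
      fun i hi => absurd hi (Nat.not_lt_zero i)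
  obtain ⟨γ, hγ, hγ0, hγ1⟩ := h01
  refine ⟨hα0, top_unique ?_⟩
  simpa [hγ1] using (hα.1 γ ⟨hγ, hγ0⟩).apply_le (k := 1)
    fun i hi => by obtain rfl : i = 0 := (by omega); rw [hγ0, hα0]

theorem not_lexLt_shift_iterate_of_isLexLUB (hshift : MapsTo shift G G) (hdense : LexDense G)
    (hα : IsLexLUB {γ ∈ G | γ 0 = false} α) (hβ : IsLexGLB {γ ∈ G | γ 0 = true} β)
    (hne : ∃ γ ∈ G, γ 0 = false) (n : ℕ) :
    ¬ (lexLt α (shift^[n] α) ∧ lexLe (shift^[n] α) β) := by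
  rintro ⟨hlt, hle⟩
  obtain ⟨k, hk, hαk⟩ := id hlt
  obtain ⟨γ, ⟨hγG, hγ0⟩, hγα⟩ := hα.exists_agree hne (n + k + 1)
  have hSγ : shift^[n] γ ∈ G := hshift.iterate n hγG
  have hprefix : ∀ i ≤ k, shift^[n] γ i = shift^[n] α i := fun i hi => by
    simpa only [shift_iterate_apply] using hγα _ (by omega)
  cases h0 : shift^[n] γ 0
  · exact (hα.1 _ ⟨hSγ, h0⟩).not_lexLt
      ⟨k, fun i hi => (hk i hi).trans (hprefix i hi.le).symm, by rwa [hprefix k le_rfl]⟩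
  · -- `β ≤ Sⁿγ ≤ Sⁿα ≤ β`, so both `α` and `β = Sⁿα` lie in `G`
    have hγα' := lexLe_shift_iterate (n := n) (hα.1 γ ⟨hγG, hγ0⟩) fun i hi => hγα i (by omega)
    have hβγ := hβ.1 _ ⟨hSγ, h0⟩
    have hγβ : shift^[n] γ = β := lexLe_antisymm (hγα'.trans hle) hβγ
    have hαβ : shift^[n] α = β := lexLe_antisymm hle (hβγ.trans hγα')
    have hγeq : γ = α :=
      eq_of_agree_of_shift_iterate_eq (fun i hi => hγα i (by omega)) (hγβ.trans hαβ.symm)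
    exact not_lexLt_of_mem_of_mem hdense hα hβ (hγeq ▸ hγG) (hγβ ▸ hSγ) (hαβ ▸ hlt)

theorem admissible_of_isLexLUB_of_isLexGLB (hshift : MapsTo shift G G)
    (hcons0 : ∀ ω ∈ G, cons0 ω ∈ G) (hone : ∃ γ ∈ G, γ 0 = true) (hdense : LexDense G)
    (hα : IsLexLUB {γ ∈ G | γ 0 = false} α) (hβ : IsLexGLB {γ ∈ G | γ 0 = true} β) :
    Admissible α β := by
  obtain ⟨γ01, hγ01, h01⟩ := exists_zero_one hcons0 hone
  obtain ⟨γ10, hγ10, h10⟩ := exists_one_zero hshift hcons0 hone hdense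
  obtain ⟨hα0, hα1⟩ := apply_zero_one_of_isLexLUB hα ⟨γ01, hγ01, h01⟩
  -- by the symmetry `ω ↦ ωᶜ`, `βᶜ` plays the role of `α` for `{ω | ωᶜ ∈ G}`
  have hshift' : MapsTo shift {ω | ωᶜ ∈ G} {ω | ωᶜ ∈ G} := fun _ hω => hshift hω
  have hβ' : IsLexLUB {γ ∈ {ω | ωᶜ ∈ G} | γ 0 = false} βᶜ := by
    simpa [compl_preimage_sep] using hβ.compl
  have hα' : IsLexGLB {γ ∈ {ω | ωᶜ ∈ G} | γ 0 = true} αᶜ := by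
    simpa [compl_preimage_sep] using hα.compl
  have h01' : ∃ γ ∈ {ω | ωᶜ ∈ G}, γ 0 = false ∧ γ 1 = true :=
    ⟨γ10ᶜ, by simpa using hγ10, by simp [h10.1], by simp [h10.2]⟩
  obtain ⟨hβ0, hβ1⟩ := apply_zero_one_of_isLexLUB hβ' h01'
  refine ⟨hα0, hα1, by simpa using hβ0, by simpa using hβ1,
    not_lexLt_shift_iterate_of_isLexLUB hshift hdense hα hβ ⟨γ01, hγ01, h01.1⟩,
    fun n ⟨h1, h2⟩ => ?_⟩
  refine not_lexLt_shift_iterate_of_isLexLUB hshift' hdense.compl hβ' hα'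
    (h01'.imp fun γ hγ => ⟨hγ.1, hγ.2.1⟩) n ⟨?_, ?_⟩
  · rwa [shift_iterate_compl, lexLt_compl_iff]
  · rwa [shift_iterate_compl, lexLe_compl_iff]

end ShiftClosedDense

section Decimals

def readFrom (m : ℤ) (d : ℤ → Bool) : Omega := fun i => d (m + i)

variable {d e : ℤ → Bool} {m : ℤ}

theorem decLt_of_lexLt_readFrom (hd : ∀ j < m, d j = false) (he : ∀ j < m, e j = false)
    (h : lexLt (readFrom m d) (readFrom m e)) : decLt d e := by
  obtain ⟨k, hk, hlt⟩ := h
  refine ⟨m + k, fun j hj => ?_, hlt⟩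
  rcases lt_or_ge j m with hjm | hjm
  · rw [hd j hjm, he j hjm]
  · obtain ⟨i, rfl⟩ := Int.le.dest hjm
    exact hk i (by omega)

theorem eq_of_readFrom_eq (hd : ∀ j < m, d j = false) (he : ∀ j < m, e j = false)
    (h : readFrom m d = readFrom m e) : d = e := by
  funext j
  rcases lt_or_ge j m with hjm | hjm
  · rw [hd j hjm, he j hjm]
  · obtain ⟨i, rfl⟩ := Int.le.dest hjm
    exact congrFun h i

theorem decLt_or_decLt_of_ne (hd : IsDecimal d) (he : IsDecimal e) (hne : d ≠ e) :
    decLt d e ∨ decLt e d := by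
  obtain ⟨md, hmd⟩ := hd
  obtain ⟨me, hme⟩ := he
  have hd' : ∀ j < min md me, d j = false := fun j hj => hmd j (lt_min_iff.1 hj).1
  have he' : ∀ j < min md me, e j = false := fun j hj => hme j (lt_min_iff.1 hj).2
  rcases lt_trichotomy (toLex (readFrom (min md me) d)) (toLex (readFrom (min md me) e))
    with h | h | h
  · exact Or.inl (decLt_of_lexLt_readFrom hd' he' h)
  · exact absurd (eq_of_readFrom_eq hd' he' (toLex_inj.1 h)) hne
  · exact Or.inr (decLt_of_lexLt_readFrom he' hd' h)

theorem le_of_apply_lt {k : ℤ} (hk : d k < e k) (he : ∀ j < m, e j = false) : m ≤ k := by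
  by_contra! hkm
  simp [he k hkm, Bool.lt_iff] at hk

theorem eq_false_of_decLt (h : decLt d e) (he : ∀ j < m, e j = false) :
    ∀ j < m, d j = false := by
  obtain ⟨k, hk, hlt⟩ := h
  intro j hj
  rw [hk j (hj.trans_le (le_of_apply_lt hlt he)), he j hj]

theorem lexLt_readFrom_of_decLt (h : decLt d e) (he : ∀ j < m, e j = false) :
    lexLt (readFrom m d) (readFrom m e) := by
  obtain ⟨k, hk, hlt⟩ := h
  obtain ⟨i, rfl⟩ := Int.le.dest (le_of_apply_lt hlt he)
  exact ⟨i, fun i' hi' => hk _ (by omega), hlt⟩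

end Decimals

section HatGamma

variable {Γ : Set (ℤ → Bool)} {d : ℤ → Bool}

theorem exists_readFrom_zero_eq (hΓ : ShiftInvariantDec Γ) (hd : d ∈ Γ) (m : ℤ) :
    ∃ e ∈ Γ, (∀ j < 0, e j = false) ∧ readFrom 0 e = readFrom m d :=
  ⟨_, hΓ d hd m 0, fun j hj => if_neg (not_le.2 hj), funext fun i => by simp [readFrom, add_comm]⟩

theorem readFrom_mem_hatGamma (hΓ : ShiftInvariantDec Γ) (hd : d ∈ Γ) (m : ℤ) :
    readFrom m d ∈ hatGamma Γ := by
  obtain ⟨e, he, he0, hde⟩ := exists_readFrom_zero_eq hΓ hd m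
  exact ⟨e, he, 0, he0, fun i => congrFun hde.symm i⟩

theorem exists_readFrom_zero_eq_of_mem_hatGamma (hΓ : ShiftInvariantDec Γ) {ω : Omega}
    (hω : ω ∈ hatGamma Γ) : ∃ e ∈ Γ, (∀ j < 0, e j = false) ∧ readFrom 0 e = ω := by
  obtain ⟨d, hd, m, -, hω⟩ := hω
  rw [show ω = readFrom m d from funext hω]
  exact exists_readFrom_zero_eq hΓ hd m

theorem mapsTo_shift_hatGamma (hΓ : ShiftInvariantDec Γ) :
    MapsTo shift (hatGamma Γ) (hatGamma Γ) := by
  rintro ω ⟨d, hd, m, -, hω⟩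
  convert readFrom_mem_hatGamma hΓ hd (m + 1) using 1
  funext i
  simp only [shift, readFrom, hω]
  congr 1
  push_cast
  ring

theorem cons0_mem_hatGamma (hΓ : ShiftInvariantDec Γ) {ω : Omega} (hω : ω ∈ hatGamma Γ) :
    cons0 ω ∈ hatGamma Γ := by
  obtain ⟨d, hd, m, hm, hω⟩ := hω
  convert readFrom_mem_hatGamma hΓ hd (m - 1) using 1
  funext i
  cases i with
  | zero => simp [cons0, readFrom, hm (m - 1) (by omega)]
  | succ i =>
    simp only [cons0, readFrom, hω]
    congr 1
    push_cast
    ring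

end HatGamma

namespace BinaryRadixSystem

variable (R : BinaryRadixSystem)

theorem decLt_of_radixVal_lt {d e : ℤ → Bool} (hd : d ∈ R.Γ) (he : e ∈ R.Γ)
    (h : radixVal R.B d < radixVal R.B e) : decLt d e :=
  (decLt_or_decLt_of_ne (R.hdec d hd) (R.hdec e he) (by rintro rfl; exact h.false)).resolve_right
    fun h' => (R.hmono e he d hd h').not_gt h

theorem exists_mem_hatGamma_apply_zero_eq_true : ∃ γ ∈ hatGamma R.Γ, γ 0 = true := by
  obtain ⟨d, hd, hd1⟩ := R.hbij.surjOn (show (1 : ℝ) ∈ Ici 0 by norm_num)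
  obtain ⟨j, hj⟩ : ∃ j, d j = true := by
    by_contra! h
    simp [radixVal, h] at hd1
  exact ⟨readFrom j d, readFrom_mem_hatGamma R.hshift hd j, by simpa [readFrom] using hj⟩

theorem lexDense_hatGamma : LexDense (hatGamma R.Γ) := by
  intro a ha b hb hab
  obtain ⟨da, hda, hda0, rfl⟩ := exists_readFrom_zero_eq_of_mem_hatGamma R.hshift ha
  obtain ⟨db, hdb, hdb0, rfl⟩ := exists_readFrom_zero_eq_of_mem_hatGamma R.hshift hb
  have hlt := R.hmono da hda db hdb (decLt_of_lexLt_readFrom hda0 hdb0 hab)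
  have hnonneg : 0 ≤ radixVal R.B da := R.hbij.mapsTo hda
  obtain ⟨f, hf, hfval⟩ :=
    R.hbij.surjOn (show (radixVal R.B da + radixVal R.B db) / 2 ∈ Ici 0 by
      rw [mem_Ici]; linarith)
  have hfdb : decLt f db := R.decLt_of_radixVal_lt hf hdb (by linarith)
  exact ⟨readFrom 0 f, readFrom_mem_hatGamma R.hshift hf 0,
    lexLt_readFrom_of_decLt (R.decLt_of_radixVal_lt hda hf (by linarith))
      (eq_false_of_decLt hfdb hdb0),
    lexLt_readFrom_of_decLt hfdb hdb0⟩

end BinaryRadixSystem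

/-- For a binary radix system `(Γ, π, B)`, if `α` is the supremum (in the
lexicographic order) of the strings of `Γ̂` beginning with `0` and `β` is the infimum of
the strings of `Γ̂` beginning with `1`, then `(α,β)` is an admissible pair. -/
theorem stmt_14 (R : BinaryRadixSystem) (α β : Omega)
    (hαub : ∀ γ ∈ {γ ∈ hatGamma R.Γ | γ 0 = false}, lexLe γ α)
    (hαlub : ∀ δ : Omega, (∀ γ ∈ {γ ∈ hatGamma R.Γ | γ 0 = false}, lexLe γ δ) → lexLe α δ)
    (hβlb : ∀ γ ∈ {γ ∈ hatGamma R.Γ | γ 0 = true}, lexLe β γ)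
    (hβglb : ∀ δ : Omega, (∀ γ ∈ {γ ∈ hatGamma R.Γ | γ 0 = true}, lexLe δ γ) → lexLe δ β) :
    Admissible α β :=
  admissible_of_isLexLUB_of_isLexGLB (mapsTo_shift_hatGamma R.hshift)
    (fun _ => cons0_mem_hatGamma R.hshift) R.exists_mem_hatGamma_apply_zero_eq_true
    R.lexDense_hatGamma ⟨hαub, hαlub⟩ ⟨hβlb, hβglb⟩
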